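/- Let a, b, c, x be positive real numbers. Then, as ℓ, m, n → ∞ (i.e., along the product filter atTop in all three variables), the triple Riemann sum (1/(2ℓmn)) · Σ_{k=1}^{ℓ} Σ_{s=1}^{m} Σ_{j=1}^{n} ln( x^2 + 4a^2 cos^2(kπ/(2ℓ+1)) + 4b^2 cos^2(sπ/(2m+1)) + 4c^2 cos^2(jπ/(2n+1)) ) converges to (4/π^3) · ∫_0^{π/2} ∫_0^{π/2} ∫_0^{π/2} ln( x^2 + 4a^2 cos^2 θ + 4b^2 cos^2 φ + 4c^2 cos^2 ψ ) dθ dφ dψ. (This limit is the free energy Φ_3(a,b,c,x) of the monopole-dimer model on three-dimensional grids, since ln Z_{2ℓ,2m,2n} equals 4 times the above triple sum.) -/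
import Mathlib


open intervalIntegral

open Real Filter


private lemma log_diff_le {d p q : ℝ} (hd : 0 < d) (hp : d ≤ p) (hq : d ≤ q) :
    |Real.log p - Real.log q| ≤ |p - q| / d := by
  wlog hpq : q ≤ p generalizing p q
  · rw [abs_sub_comm, abs_sub_comm p q]
    exact this hq hp (le_of_not_ge hpq)
  have hq0 : 0 < q := lt_of_lt_of_le hd hq
  have hp0 : 0 < p := lt_of_lt_of_le hd hp
  rw [abs_of_nonneg (sub_nonneg.2 (Real.log_le_log hq0 hpq)),
    abs_of_nonneg (sub_nonneg.2 hpq), ← Real.log_div (ne_of_gt hp0) (ne_of_gt hq0)]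
  calc Real.log (p / q) ≤ p / q - 1 := Real.log_le_sub_one_of_pos (by positivity)
    _ = (p - q) / q := by field_simp
    _ ≤ (p - q) / d := by
        exact div_le_div_of_nonneg_left (sub_nonneg.2 hpq) hd hq

private lemma cossq_lip (u v : ℝ) : |Real.cos u ^ 2 - Real.cos v ^ 2| ≤ 2 * |u - v| := by
  have h2 : |Real.cos u - Real.cos v| ≤ |u - v| := by
    rw [Real.cos_sub_cos]
    calc |(-2) * Real.sin ((u + v) / 2) * Real.sin ((u - v) / 2)|
        = 2 * (|Real.sin ((u + v) / 2)| * |Real.sin ((u - v) / 2)|) := by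
          rw [abs_mul, abs_mul]
          norm_num [mul_assoc]
      _ ≤ 2 * (1 * |(u - v) / 2|) :=
          mul_le_mul_of_nonneg_left
            (mul_le_mul (Real.abs_sin_le_one _) Real.abs_sin_le_abs (abs_nonneg _)
              zero_le_one) (by norm_num)
      _ = |u - v| := by rw [abs_div, abs_two]; ring
  have h3 : |Real.cos u + Real.cos v| ≤ 2 := by
    calc |Real.cos u + Real.cos v| ≤ |Real.cos u| + |Real.cos v| := abs_add_le _ _
      _ ≤ 1 + 1 := add_le_add (Real.abs_cos_le_one _) (Real.abs_cos_le_one _)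
      _ = 2 := by norm_num
  calc |Real.cos u ^ 2 - Real.cos v ^ 2|
      = |Real.cos u - Real.cos v| * |Real.cos u + Real.cos v| := by
        rw [← abs_mul]; ring_nf
    _ ≤ |u - v| * 2 := mul_le_mul h2 h3 (abs_nonneg _) (abs_nonneg _)
    _ = 2 * |u - v| := mul_comm _ _

private lemma avg_abs_le {n : ℕ} (hn : 1 ≤ n) {u : ℕ → ℝ} {B : ℝ}
    (hu : ∀ j ∈ Finset.Icc 1 n, |u j| ≤ B) :
    |(1 / (n : ℝ)) * ∑ j ∈ Finset.Icc 1 n, u j| ≤ B := by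
  have hn0 : (0:ℝ) < n := by exact_mod_cast Nat.lt_of_lt_of_le Nat.zero_lt_one hn
  rw [abs_mul, abs_of_pos (by positivity : (0:ℝ) < 1 / n)]
  have h2 : |∑ j ∈ Finset.Icc 1 n, u j| ≤ (n:ℝ) * B := by
    calc |∑ j ∈ Finset.Icc 1 n, u j| ≤ ∑ j ∈ Finset.Icc 1 n, |u j| :=
          Finset.abs_sum_le_sum_abs _ _
      _ ≤ ∑ _j ∈ Finset.Icc 1 n, B := Finset.sum_le_sum hu
      _ = (n:ℝ) * B := by
          rw [Finset.sum_const, Nat.card_Icc, nsmul_eq_mul]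
          norm_num
  calc (1/(n:ℝ)) * |∑ j ∈ Finset.Icc 1 n, u j| ≤ (1/(n:ℝ)) * ((n:ℝ) * B) := by gcongr
    _ = B := by field_simp

noncomputable def FF (a b c x θ φ ψ : ℝ) : ℝ :=
  Real.log (x ^ 2 + 4 * a ^ 2 * Real.cos θ ^ 2 + 4 * b ^ 2 * Real.cos φ ^ 2
    + 4 * c ^ 2 * Real.cos ψ ^ 2)

noncomputable def MM (a b c x : ℝ) : ℝ :=
  |Real.log (x ^ 2)| + |Real.log (x ^ 2 + 4 * a ^ 2 + 4 * b ^ 2 + 4 * c ^ 2)|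

noncomputable def HH2 (a b c x φ ψ : ℝ) : ℝ :=
  (2 / Real.pi) * ∫ θ in (0:ℝ)..(Real.pi/2), FF a b c x θ φ ψ

noncomputable def HH1 (a b c x ψ : ℝ) : ℝ :=
  (2 / Real.pi) * ∫ φ in (0:ℝ)..(Real.pi/2), HH2 a b c x φ ψ

private lemma FF_arg_lb (a b c x θ φ ψ : ℝ) :
    x ^ 2 ≤ x ^ 2 + 4 * a ^ 2 * Real.cos θ ^ 2 + 4 * b ^ 2 * Real.cos φ ^ 2
      + 4 * c ^ 2 * Real.cos ψ ^ 2 := by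
  nlinarith [sq_nonneg (a * Real.cos θ), sq_nonneg (b * Real.cos φ), sq_nonneg (c * Real.cos ψ)]

private lemma FF_arg_ub (a b c x θ φ ψ : ℝ) :
    x ^ 2 + 4 * a ^ 2 * Real.cos θ ^ 2 + 4 * b ^ 2 * Real.cos φ ^ 2
      + 4 * c ^ 2 * Real.cos ψ ^ 2 ≤ x ^ 2 + 4 * a ^ 2 + 4 * b ^ 2 + 4 * c ^ 2 := by
  nlinarith [Real.cos_sq_le_one θ, Real.cos_sq_le_one φ, Real.cos_sq_le_one ψ,
    sq_nonneg a, sq_nonneg b, sq_nonneg c]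

private lemma FF_bound (a b c x : ℝ) (hx : 0 < x) (θ φ ψ : ℝ) :
    |FF a b c x θ φ ψ| ≤ MM a b c x := by
  have hx2 : (0:ℝ) < x ^ 2 := by positivity
  have h1 : Real.log (x ^ 2) ≤ FF a b c x θ φ ψ :=
    Real.log_le_log hx2 (FF_arg_lb a b c x θ φ ψ)
  have h2 : FF a b c x θ φ ψ ≤ Real.log (x ^ 2 + 4 * a ^ 2 + 4 * b ^ 2 + 4 * c ^ 2) :=
    Real.log_le_log (lt_of_lt_of_le hx2 (FF_arg_lb a b c x θ φ ψ)) (FF_arg_ub a b c x θ φ ψ)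
  rw [abs_le, MM]
  constructor
  · have := neg_abs_le (Real.log (x ^ 2))
    have := abs_nonneg (Real.log (x ^ 2 + 4 * a ^ 2 + 4 * b ^ 2 + 4 * c ^ 2))
    linarith
  · have := le_abs_self (Real.log (x ^ 2 + 4 * a ^ 2 + 4 * b ^ 2 + 4 * c ^ 2))
    have := abs_nonneg (Real.log (x ^ 2))
    linarith

private lemma MM_nonneg (a b c x : ℝ) : 0 ≤ MM a b c x :=
  add_nonneg (abs_nonneg _) (abs_nonneg _)
private lemma FF_lip1 (a b c x : ℝ) (hx : 0 < x) (θ θ' φ ψ : ℝ) :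
    |FF a b c x θ φ ψ - FF a b c x θ' φ ψ| ≤ 8 * a ^ 2 / x ^ 2 * |θ - θ'| := by
  have hx2 : (0:ℝ) < x ^ 2 := by positivity
  calc |FF a b c x θ φ ψ - FF a b c x θ' φ ψ|
      ≤ |(x ^ 2 + 4 * a ^ 2 * Real.cos θ ^ 2 + 4 * b ^ 2 * Real.cos φ ^ 2
          + 4 * c ^ 2 * Real.cos ψ ^ 2)
        - (x ^ 2 + 4 * a ^ 2 * Real.cos θ' ^ 2 + 4 * b ^ 2 * Real.cos φ ^ 2
          + 4 * c ^ 2 * Real.cos ψ ^ 2)| / x ^ 2 :=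
        log_diff_le hx2 (FF_arg_lb a b c x θ φ ψ) (FF_arg_lb a b c x θ' φ ψ)
    _ = 4 * a ^ 2 * |Real.cos θ ^ 2 - Real.cos θ' ^ 2| / x ^ 2 := by
        rw [show (x ^ 2 + 4 * a ^ 2 * Real.cos θ ^ 2 + 4 * b ^ 2 * Real.cos φ ^ 2
          + 4 * c ^ 2 * Real.cos ψ ^ 2)
        - (x ^ 2 + 4 * a ^ 2 * Real.cos θ' ^ 2 + 4 * b ^ 2 * Real.cos φ ^ 2
          + 4 * c ^ 2 * Real.cos ψ ^ 2) = 4 * a ^ 2 * (Real.cos θ ^ 2 - Real.cos θ' ^ 2)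
          from by ring, abs_mul, abs_of_nonneg (by positivity : (0:ℝ) ≤ 4 * a ^ 2)]
    _ ≤ 4 * a ^ 2 * (2 * |θ - θ'|) / x ^ 2 := by gcongr; exact cossq_lip θ θ'
    _ = 8 * a ^ 2 / x ^ 2 * |θ - θ'| := by ring

private lemma FF_lip2 (a b c x : ℝ) (hx : 0 < x) (θ φ φ' ψ : ℝ) :
    |FF a b c x θ φ ψ - FF a b c x θ φ' ψ| ≤ 8 * b ^ 2 / x ^ 2 * |φ - φ'| := by
  have hx2 : (0:ℝ) < x ^ 2 := by positivity
  calc |FF a b c x θ φ ψ - FF a b c x θ φ' ψ|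
      ≤ |(x ^ 2 + 4 * a ^ 2 * Real.cos θ ^ 2 + 4 * b ^ 2 * Real.cos φ ^ 2
          + 4 * c ^ 2 * Real.cos ψ ^ 2)
        - (x ^ 2 + 4 * a ^ 2 * Real.cos θ ^ 2 + 4 * b ^ 2 * Real.cos φ' ^ 2
          + 4 * c ^ 2 * Real.cos ψ ^ 2)| / x ^ 2 :=
        log_diff_le hx2 (FF_arg_lb a b c x θ φ ψ) (FF_arg_lb a b c x θ φ' ψ)
    _ = 4 * b ^ 2 * |Real.cos φ ^ 2 - Real.cos φ' ^ 2| / x ^ 2 := by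
        rw [show (x ^ 2 + 4 * a ^ 2 * Real.cos θ ^ 2 + 4 * b ^ 2 * Real.cos φ ^ 2
          + 4 * c ^ 2 * Real.cos ψ ^ 2)
        - (x ^ 2 + 4 * a ^ 2 * Real.cos θ ^ 2 + 4 * b ^ 2 * Real.cos φ' ^ 2
          + 4 * c ^ 2 * Real.cos ψ ^ 2) = 4 * b ^ 2 * (Real.cos φ ^ 2 - Real.cos φ' ^ 2)
          from by ring, abs_mul, abs_of_nonneg (by positivity : (0:ℝ) ≤ 4 * b ^ 2)]
    _ ≤ 4 * b ^ 2 * (2 * |φ - φ'|) / x ^ 2 := by gcongr; exact cossq_lip φ φ'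
    _ = 8 * b ^ 2 / x ^ 2 * |φ - φ'| := by ring

private lemma FF_lip3 (a b c x : ℝ) (hx : 0 < x) (θ φ ψ ψ' : ℝ) :
    |FF a b c x θ φ ψ - FF a b c x θ φ ψ'| ≤ 8 * c ^ 2 / x ^ 2 * |ψ - ψ'| := by
  have hx2 : (0:ℝ) < x ^ 2 := by positivity
  calc |FF a b c x θ φ ψ - FF a b c x θ φ ψ'|
      ≤ |(x ^ 2 + 4 * a ^ 2 * Real.cos θ ^ 2 + 4 * b ^ 2 * Real.cos φ ^ 2
          + 4 * c ^ 2 * Real.cos ψ ^ 2)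
        - (x ^ 2 + 4 * a ^ 2 * Real.cos θ ^ 2 + 4 * b ^ 2 * Real.cos φ ^ 2
          + 4 * c ^ 2 * Real.cos ψ' ^ 2)| / x ^ 2 :=
        log_diff_le hx2 (FF_arg_lb a b c x θ φ ψ) (FF_arg_lb a b c x θ φ ψ')
    _ = 4 * c ^ 2 * |Real.cos ψ ^ 2 - Real.cos ψ' ^ 2| / x ^ 2 := by
        rw [show (x ^ 2 + 4 * a ^ 2 * Real.cos θ ^ 2 + 4 * b ^ 2 * Real.cos φ ^ 2
          + 4 * c ^ 2 * Real.cos ψ ^ 2)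
        - (x ^ 2 + 4 * a ^ 2 * Real.cos θ ^ 2 + 4 * b ^ 2 * Real.cos φ ^ 2
          + 4 * c ^ 2 * Real.cos ψ' ^ 2) = 4 * c ^ 2 * (Real.cos ψ ^ 2 - Real.cos ψ' ^ 2)
          from by ring, abs_mul, abs_of_nonneg (by positivity : (0:ℝ) ≤ 4 * c ^ 2)]
    _ ≤ 4 * c ^ 2 * (2 * |ψ - ψ'|) / x ^ 2 := by gcongr; exact cossq_lip ψ ψ'
    _ = 8 * c ^ 2 / x ^ 2 * |ψ - ψ'| := by ring

private lemma FF_cont1 (a b c x : ℝ) (hx : 0 < x) (φ ψ : ℝ) :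
    Continuous fun θ => FF a b c x θ φ ψ := by
  apply Continuous.log
  · fun_prop
  · intro t
    have := FF_arg_lb a b c x t φ ψ
    have hx2 : (0:ℝ) < x ^ 2 := by positivity
    exact ne_of_gt (lt_of_lt_of_le hx2 this)

private lemma FF_int1 (a b c x : ℝ) (hx : 0 < x) (φ ψ : ℝ) :
    IntervalIntegrable (fun θ => FF a b c x θ φ ψ) MeasureTheory.volume 0 (Real.pi/2) :=
  (FF_cont1 a b c x hx φ ψ).intervalIntegrable _ _
private lemma int_abs_le (g : ℝ → ℝ) (C : ℝ) (hg : ∀ t, |g t| ≤ C) :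
    |∫ t in (0:ℝ)..(Real.pi/2), g t| ≤ C * (Real.pi/2) := by
  have hπ := Real.pi_pos
  have h := intervalIntegral.norm_integral_le_of_norm_le_const (C := C) (f := g)
    (a := (0:ℝ)) (b := Real.pi/2) (fun t _ => by rw [Real.norm_eq_abs]; exact hg t)
  have habs : |Real.pi/2 - (0:ℝ)| = Real.pi/2 := by
    rw [sub_zero]; exact abs_of_pos (by linarith)
  calc |∫ t in (0:ℝ)..(Real.pi/2), g t| = ‖∫ t in (0:ℝ)..(Real.pi/2), g t‖ :=
        (Real.norm_eq_abs _).symm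
    _ ≤ C * |Real.pi/2 - (0:ℝ)| := h
    _ = C * (Real.pi/2) := by rw [habs]

private lemma twopi_mul_le {I C : ℝ} (hI : |I| ≤ C * (Real.pi/2)) :
    |(2/Real.pi) * I| ≤ C := by
  have hπ := Real.pi_pos
  have h2π : (0:ℝ) < 2/Real.pi := div_pos two_pos hπ
  rw [abs_mul, abs_of_pos h2π]
  calc (2/Real.pi) * |I| ≤ (2/Real.pi) * (C * (Real.pi/2)) := by gcongr
    _ = C := by field_simp

private lemma HH2_sub_phi (a b c x : ℝ) (hx : 0 < x) (φ φ' ψ : ℝ) :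
    |HH2 a b c x φ ψ - HH2 a b c x φ' ψ| ≤ 8 * b ^ 2 / x ^ 2 * |φ - φ'| := by
  have h : HH2 a b c x φ ψ - HH2 a b c x φ' ψ
      = (2/Real.pi) * ∫ θ in (0:ℝ)..(Real.pi/2), (FF a b c x θ φ ψ - FF a b c x θ φ' ψ) := by
    rw [intervalIntegral.integral_sub (FF_int1 a b c x hx φ ψ) (FF_int1 a b c x hx φ' ψ)]
    rw [HH2, HH2]; ring
  rw [h]
  exact twopi_mul_le (int_abs_le _ _ (fun t => FF_lip2 a b c x hx t φ φ' ψ))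

private lemma HH2_sub_psi (a b c x : ℝ) (hx : 0 < x) (φ ψ ψ' : ℝ) :
    |HH2 a b c x φ ψ - HH2 a b c x φ ψ'| ≤ 8 * c ^ 2 / x ^ 2 * |ψ - ψ'| := by
  have h : HH2 a b c x φ ψ - HH2 a b c x φ ψ'
      = (2/Real.pi) * ∫ θ in (0:ℝ)..(Real.pi/2), (FF a b c x θ φ ψ - FF a b c x θ φ ψ') := by
    rw [intervalIntegral.integral_sub (FF_int1 a b c x hx φ ψ) (FF_int1 a b c x hx φ ψ')]
    rw [HH2, HH2]; ring
  rw [h]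
  exact twopi_mul_le (int_abs_le _ _ (fun t => FF_lip3 a b c x hx t φ ψ ψ'))

private lemma HH2_bound (a b c x : ℝ) (hx : 0 < x) (φ ψ : ℝ) :
    |HH2 a b c x φ ψ| ≤ MM a b c x := by
  rw [HH2]
  exact twopi_mul_le (int_abs_le _ _ (fun t => FF_bound a b c x hx t φ ψ))

private lemma HH2_cont_phi (a b c x : ℝ) (hx : 0 < x) (ψ : ℝ) :
    Continuous fun φ => HH2 a b c x φ ψ := by
  have hlip : LipschitzWith (Real.toNNReal (8 * b ^ 2 / x ^ 2)) (fun φ => HH2 a b c x φ ψ) := by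
    apply LipschitzWith.of_dist_le_mul
    intro u v
    rw [Real.dist_eq, Real.dist_eq, Real.coe_toNNReal _ (by positivity)]
    exact HH2_sub_phi a b c x hx u v ψ
  exact hlip.continuous

private lemma HH2_int_phi (a b c x : ℝ) (hx : 0 < x) (ψ : ℝ) :
    IntervalIntegrable (fun φ => HH2 a b c x φ ψ) MeasureTheory.volume 0 (Real.pi/2) :=
  (HH2_cont_phi a b c x hx ψ).intervalIntegrable _ _

private lemma HH1_sub (a b c x : ℝ) (hx : 0 < x) (ψ ψ' : ℝ) :
    |HH1 a b c x ψ - HH1 a b c x ψ'| ≤ 8 * c ^ 2 / x ^ 2 * |ψ - ψ'| := by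
  have h : HH1 a b c x ψ - HH1 a b c x ψ'
      = (2/Real.pi) * ∫ φ in (0:ℝ)..(Real.pi/2), (HH2 a b c x φ ψ - HH2 a b c x φ ψ') := by
    rw [intervalIntegral.integral_sub (HH2_int_phi a b c x hx ψ) (HH2_int_phi a b c x hx ψ')]
    rw [HH1, HH1]; ring
  rw [h]
  exact twopi_mul_le (int_abs_le _ _ (fun t => HH2_sub_psi a b c x hx t ψ ψ'))

private lemma HH1_bound (a b c x : ℝ) (hx : 0 < x) (ψ : ℝ) :
    |HH1 a b c x ψ| ≤ MM a b c x := by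
  rw [HH1]
  exact twopi_mul_le (int_abs_le _ _ (fun t => HH2_bound a b c x hx t ψ))
set_option maxHeartbeats 1000000 in
private lemma riemann1d (f : ℝ → ℝ) (L M : ℝ) (hL0 : 0 ≤ L)
    (hL : ∀ u ∈ Set.Icc (0:ℝ) (Real.pi/2), ∀ v ∈ Set.Icc (0:ℝ) (Real.pi/2),
      |f u - f v| ≤ L * |u - v|)
    (hM : ∀ t ∈ Set.Icc (0:ℝ) (Real.pi/2), |f t| ≤ M)
    (ℓ : ℕ) (hℓ : 1 ≤ ℓ) :
    |(1 / (ℓ:ℝ)) * ∑ k ∈ Finset.Icc 1 ℓ, f ((k:ℝ) * Real.pi / (2*(ℓ:ℝ)+1)) -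
      (2/Real.pi) * ∫ t in (0:ℝ)..(Real.pi/2), f t| ≤ (Real.pi * L + M) / ℓ := by
  have hπ := Real.pi_pos
  have hM0 : 0 ≤ M := le_trans (abs_nonneg _) (hM 0 ⟨le_refl 0, by linarith⟩)
  have hl0 : (0:ℝ) < (ℓ:ℝ) := by exact_mod_cast Nat.lt_of_lt_of_le Nat.zero_lt_one hℓ
  set h : ℝ := Real.pi / (2*(ℓ:ℝ)+1) with hh
  have hh0 : 0 < h := by rw [hh]; positivity
  set T : ℝ := (ℓ:ℝ) * h with hT
  have hT0 : 0 < T := by rw [hT]; positivity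
  have hTP : T + h/2 = Real.pi/2 := by
    rw [hT, hh]
    field_simp
  have hTle : T ≤ Real.pi/2 := by linarith
  -- continuity and integrability
  have hcont : ContinuousOn f (Set.Icc 0 (Real.pi/2)) := by
    have hlip : LipschitzOnWith (Real.toNNReal L) f (Set.Icc 0 (Real.pi/2)) := by
      rw [lipschitzOnWith_iff_dist_le_mul]
      intro u hu v hv
      rw [Real.dist_eq, Real.dist_eq, Real.coe_toNNReal _ hL0]
      exact hL u hu v hv
    exact hlip.continuousOn
  have hint : ∀ u v : ℝ, 0 ≤ u → v ≤ Real.pi/2 → u ≤ v →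
      IntervalIntegrable f MeasureTheory.volume u v := by
    intro u v hu hv huv
    apply (hcont.mono ?_).intervalIntegrable
    rw [Set.uIcc_of_le huv]
    exact Set.Icc_subset_Icc hu hv
  have hmem : ∀ i : ℕ, i ≤ ℓ → (i:ℝ) * h ∈ Set.Icc (0:ℝ) (Real.pi/2) := by
    intro i hi
    constructor
    · positivity
    · calc (i:ℝ)*h ≤ (ℓ:ℝ)*h := mul_le_mul_of_nonneg_right (by exact_mod_cast hi) hh0.le
        _ ≤ Real.pi/2 := hTle
  -- decompose the integral over [0, T]
  have hA : ∑ i ∈ Finset.range ℓ, ∫ t in ((i:ℝ)*h)..(((i:ℝ)+1)*h), f t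
      = ∫ t in (0:ℝ)..T, f t := by
    have key := intervalIntegral.sum_integral_adjacent_intervals
      (μ := MeasureTheory.volume) (f := f) (a := fun i : ℕ => (i:ℝ)*h) (n := ℓ)
      (fun k hk => by
        refine hint _ _ (by positivity) (hmem (k+1) hk).2 ?_
        have : (k:ℝ) ≤ ((k+1:ℕ):ℝ) := by push_cast; linarith
        exact mul_le_mul_of_nonneg_right this hh0.le)
    have e1 : ((0:ℕ):ℝ) * h = 0 := by norm_num
    calc ∑ i ∈ Finset.range ℓ, ∫ t in ((i:ℝ)*h)..(((i:ℝ)+1)*h), f t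
        = ∑ i ∈ Finset.range ℓ, ∫ t in ((i:ℝ)*h)..((((i+1:ℕ)):ℝ)*h), f t := by
          refine Finset.sum_congr rfl fun i _ => ?_
          congr 1
          push_cast
          ring
      _ = ∫ t in (((0:ℕ):ℝ)*h)..(((ℓ:ℕ):ℝ)*h), f t := key
      _ = ∫ t in (0:ℝ)..T, f t := by rw [e1, hT]
  -- per-interval estimate
  have hkey : ∀ i ∈ Finset.range ℓ,
      |h * f (((i:ℝ)+1)*h) - ∫ t in ((i:ℝ)*h)..(((i:ℝ)+1)*h), f t| ≤ L*h*h := by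
    intro i hi
    have hiℓ : i < ℓ := Finset.mem_range.1 hi
    have hm1 : (i:ℝ)*h ∈ Set.Icc (0:ℝ) (Real.pi/2) := hmem i hiℓ.le
    have hm2 : ((i:ℝ)+1)*h ∈ Set.Icc (0:ℝ) (Real.pi/2) := by
      have := hmem (i+1) hiℓ
      push_cast at this
      exact this
    have hle : (i:ℝ)*h ≤ ((i:ℝ)+1)*h := by nlinarith [hh0.le]
    have hii : IntervalIntegrable f MeasureTheory.volume ((i:ℝ)*h) (((i:ℝ)+1)*h) :=
      hint _ _ hm1.1 hm2.2 hle
    have hc : h * f (((i:ℝ)+1)*h)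
        = ∫ _t in ((i:ℝ)*h)..(((i:ℝ)+1)*h), f (((i:ℝ)+1)*h) := by
      rw [intervalIntegral.integral_const, smul_eq_mul]
      ring
    rw [hc, ← intervalIntegral.integral_sub intervalIntegrable_const hii]
    have hbd : ∀ t ∈ Set.uIoc ((i:ℝ)*h) (((i:ℝ)+1)*h), ‖f (((i:ℝ)+1)*h) - f t‖ ≤ L*h := by
      intro t ht
      rw [Set.uIoc_of_le hle] at ht
      have ht1 : t ∈ Set.Icc (0:ℝ) (Real.pi/2) :=
        ⟨le_trans hm1.1 ht.1.le, le_trans ht.2 hm2.2⟩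
      rw [Real.norm_eq_abs]
      calc |f (((i:ℝ)+1)*h) - f t| ≤ L * |((i:ℝ)+1)*h - t| := hL _ hm2 _ ht1
        _ ≤ L * h := by
            have h1 : ((i:ℝ)+1)*h - t ≤ h := by nlinarith [ht.1]
            have h2 : 0 ≤ ((i:ℝ)+1)*h - t := by linarith [ht.2]
            rw [abs_of_nonneg h2]
            exact mul_le_mul_of_nonneg_left h1 hL0
    have hn := intervalIntegral.norm_integral_le_of_norm_le_const hbd
    have habs : |((i:ℝ)+1)*h - (i:ℝ)*h| = h := by
      rw [show ((i:ℝ)+1)*h - (i:ℝ)*h = h from by ring, abs_of_pos hh0]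
    calc |∫ t in ((i:ℝ)*h)..(((i:ℝ)+1)*h), (f (((i:ℝ)+1)*h) - f t)|
        = ‖∫ t in ((i:ℝ)*h)..(((i:ℝ)+1)*h), (f (((i:ℝ)+1)*h) - f t)‖ :=
          (Real.norm_eq_abs _).symm
      _ ≤ (L*h) * |((i:ℝ)+1)*h - (i:ℝ)*h| := hn
      _ = L*h*h := by rw [habs]
  -- rewrite the Riemann sum
  have hS : ∑ k ∈ Finset.Icc 1 ℓ, f ((k:ℝ) * Real.pi / (2*(ℓ:ℝ)+1))
      = ∑ i ∈ Finset.range ℓ, f (((i:ℝ)+1)*h) := by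
    rw [← Finset.Ico_add_one_right_eq_Icc, Finset.sum_Ico_eq_sum_range]
    have hr : ℓ + 1 - 1 = ℓ := by omega
    rw [hr]
    refine Finset.sum_congr rfl fun i _ => ?_
    congr 1
    rw [hh]
    push_cast
    ring
  set S : ℝ := ∑ i ∈ Finset.range ℓ, f (((i:ℝ)+1)*h) with hSdef
  set JT : ℝ := ∫ t in (0:ℝ)..T, f t with hJT
  set JP : ℝ := ∫ t in (0:ℝ)..(Real.pi/2), f t with hJP
  -- bound |h*S - JT|
  have hB : |h * S - JT| ≤ (ℓ:ℝ) * (L*h*h) := by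
    rw [hSdef, ← hA, Finset.mul_sum, ← Finset.sum_sub_distrib]
    calc |∑ i ∈ Finset.range ℓ, (h * f (((i:ℝ)+1)*h) - ∫ t in ((i:ℝ)*h)..(((i:ℝ)+1)*h), f t)|
        ≤ ∑ i ∈ Finset.range ℓ, |h * f (((i:ℝ)+1)*h) - ∫ t in ((i:ℝ)*h)..(((i:ℝ)+1)*h), f t| :=
          Finset.abs_sum_le_sum_abs _ _
      _ ≤ ∑ _i ∈ Finset.range ℓ, L*h*h := Finset.sum_le_sum hkey
      _ = (ℓ:ℝ) * (L*h*h) := by rw [Finset.sum_const, Finset.card_range, nsmul_eq_mul]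
  -- bound |JT|
  have hJTb : |JT| ≤ M * T := by
    have hbd : ∀ t ∈ Set.uIoc (0:ℝ) T, ‖f t‖ ≤ M := by
      intro t ht
      rw [Set.uIoc_of_le hT0.le] at ht
      rw [Real.norm_eq_abs]
      exact hM t ⟨ht.1.le, le_trans ht.2 hTle⟩
    have hn := intervalIntegral.norm_integral_le_of_norm_le_const hbd
    rw [sub_zero, abs_of_pos hT0] at hn
    calc |JT| = ‖∫ t in (0:ℝ)..T, f t‖ := (Real.norm_eq_abs _).symm
      _ ≤ M * T := hn
  -- bound |JP - JT|
  have hC : |JT - JP| ≤ M * (h/2) := by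
    have hsplit : JT + ∫ t in T..(Real.pi/2), f t = JP :=
      intervalIntegral.integral_add_adjacent_intervals
        (hint 0 T le_rfl hTle hT0.le) (hint T (Real.pi/2) hT0.le le_rfl hTle)
    have hbd : ∀ t ∈ Set.uIoc T (Real.pi/2), ‖f t‖ ≤ M := by
      intro t ht
      rw [Set.uIoc_of_le hTle] at ht
      rw [Real.norm_eq_abs]
      exact hM t ⟨le_trans hT0.le ht.1.le, ht.2⟩
    have hn := intervalIntegral.norm_integral_le_of_norm_le_const hbd
    have habs : |Real.pi/2 - T| = h/2 := by
      rw [show Real.pi/2 - T = h/2 from by linarith, abs_of_pos (by linarith)]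
    rw [habs] at hn
    have hdiff : JT - JP = -(∫ t in T..(Real.pi/2), f t) := by
      rw [← hsplit]; ring
    calc |JT - JP| = |∫ t in T..(Real.pi/2), f t| := by
          rw [hdiff, abs_neg]
      _ = ‖∫ t in T..(Real.pi/2), f t‖ := (Real.norm_eq_abs _).symm
      _ ≤ M * (h/2) := hn
  -- the exact decomposition
  have hπeq : Real.pi = 2*T + h := by linarith
  have hid : (1/(ℓ:ℝ))*S - (2/Real.pi)*JP
      = (1/T)*(h*S - JT) + ((h/2)/(T*(Real.pi/2)))*JT + (2/Real.pi)*(JT - JP) := by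
    rw [hπeq, hT]
    field_simp
    ring
  rw [hS, hid]
  have t1 : |(1/T)*(h*S - JT)| ≤ L * h := by
    rw [abs_mul, abs_of_pos (by positivity : (0:ℝ) < 1/T)]
    calc (1/T) * |h*S - JT| ≤ (1/T) * ((ℓ:ℝ) * (L*h*h)) := by gcongr
      _ = L * h := by rw [hT]; field_simp
  have t2 : |((h/2)/(T*(Real.pi/2)))*JT| ≤ M * h / Real.pi := by
    rw [abs_mul, abs_of_pos (by positivity : (0:ℝ) < (h/2)/(T*(Real.pi/2)))]
    calc ((h/2)/(T*(Real.pi/2))) * |JT| ≤ ((h/2)/(T*(Real.pi/2))) * (M * T) := by gcongr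
      _ = M * h / Real.pi := by field_simp
  have t3 : |(2/Real.pi)*(JT - JP)| ≤ M * h / Real.pi := by
    rw [abs_mul, abs_of_pos (by positivity : (0:ℝ) < 2/Real.pi)]
    calc (2/Real.pi) * |JT - JP| ≤ (2/Real.pi) * (M * (h/2)) := by gcongr
      _ = M * h / Real.pi := by field_simp
  have hfin : L * h + M * h / Real.pi + M * h / Real.pi ≤ (Real.pi*L + M) / ℓ := by
    have e : L * h + M * h / Real.pi + M * h / Real.pi
        = (L*Real.pi + 2*M) / (2*(ℓ:ℝ)+1) := by
      rw [hh]; field_simp; ring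
    rw [e, div_le_div_iff₀ (by positivity) hl0]
    have h1 : 0 ≤ (ℓ:ℝ) * Real.pi * L := mul_nonneg (mul_nonneg hl0.le hπ.le) hL0
    have h2 : 0 ≤ Real.pi * L := mul_nonneg hπ.le hL0
    nlinarith [h1, h2, hM0]
  calc |(1/T)*(h*S - JT) + ((h/2)/(T*(Real.pi/2)))*JT + (2/Real.pi)*(JT - JP)|
      ≤ |(1/T)*(h*S - JT)| + |((h/2)/(T*(Real.pi/2)))*JT| + |(2/Real.pi)*(JT - JP)| :=
        abs_add_three _ _ _
    _ ≤ L * h + M * h / Real.pi + M * h / Real.pi := add_le_add (add_le_add t1 t2) t3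
    _ ≤ (Real.pi*L + M) / ℓ := hfin
private lemma sum_swap3 {A B C : Finset ℕ} (g : ℕ → ℕ → ℕ → ℝ) :
    ∑ k ∈ A, ∑ s ∈ B, ∑ j ∈ C, g k s j = ∑ j ∈ C, ∑ s ∈ B, ∑ k ∈ A, g k s j := by
  calc ∑ k ∈ A, ∑ s ∈ B, ∑ j ∈ C, g k s j
      = ∑ s ∈ B, ∑ k ∈ A, ∑ j ∈ C, g k s j := Finset.sum_comm
    _ = ∑ s ∈ B, ∑ j ∈ C, ∑ k ∈ A, g k s j :=
        Finset.sum_congr rfl fun s _ => Finset.sum_comm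
    _ = ∑ j ∈ C, ∑ s ∈ B, ∑ k ∈ A, g k s j := Finset.sum_comm

set_option maxHeartbeats 1000000 in
/-- The free energy of the monopole-dimer model on three-dimensional grids: as
`ℓ, m, n → ∞` along the product filter, the triple Riemann sum
`(1/(2ℓmn)) Σ_{k=1}^{ℓ} Σ_{s=1}^{m} Σ_{j=1}^{n} ln(x² + 4a² cos²(kπ/(2ℓ+1))
+ 4b² cos²(sπ/(2m+1)) + 4c² cos²(jπ/(2n+1)))` converges to
`(4/π³) ∫₀^{π/2} ∫₀^{π/2} ∫₀^{π/2} ln(x² + 4a² cos²θ + 4b² cos²φ + 4c² cos²ψ) dθ dφ dψ`. -/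
theorem freeEnergy3d (a b c x : ℝ) (ha : 0 < a) (hb : 0 < b) (hc : 0 < c) (hx : 0 < x) :
    Filter.Tendsto
      (fun p : ℕ × ℕ × ℕ =>
        (1 / (2 * (p.1 : ℝ) * (p.2.1 : ℝ) * (p.2.2 : ℝ))) *
          ∑ k ∈ Finset.Icc 1 p.1, ∑ s ∈ Finset.Icc 1 p.2.1, ∑ j ∈ Finset.Icc 1 p.2.2,
            Real.log (x ^ 2
              + 4 * a ^ 2 * Real.cos ((k : ℝ) * Real.pi / (2 * (p.1 : ℝ) + 1)) ^ 2
              + 4 * b ^ 2 * Real.cos ((s : ℝ) * Real.pi / (2 * (p.2.1 : ℝ) + 1)) ^ 2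
              + 4 * c ^ 2 * Real.cos ((j : ℝ) * Real.pi / (2 * (p.2.2 : ℝ) + 1)) ^ 2))
      Filter.atTop
      (nhds ((4 / Real.pi ^ 3) *
        ∫ ψ in (0 : ℝ)..(Real.pi / 2), ∫ φ in (0 : ℝ)..(Real.pi / 2),
          ∫ θ in (0 : ℝ)..(Real.pi / 2),
            Real.log (x ^ 2 + 4 * a ^ 2 * Real.cos θ ^ 2 + 4 * b ^ 2 * Real.cos φ ^ 2
              + 4 * c ^ 2 * Real.cos ψ ^ 2))) := by
  have hπ := Real.pi_pos
  have htgt : (4 / Real.pi ^ 3) *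
      ∫ ψ in (0 : ℝ)..(Real.pi / 2), ∫ φ in (0 : ℝ)..(Real.pi / 2),
        ∫ θ in (0 : ℝ)..(Real.pi / 2),
          Real.log (x ^ 2 + 4 * a ^ 2 * Real.cos θ ^ 2 + 4 * b ^ 2 * Real.cos φ ^ 2
            + 4 * c ^ 2 * Real.cos ψ ^ 2)
      = (1/2) * ((2/Real.pi) * ∫ ψ in (0:ℝ)..(Real.pi/2), HH1 a b c x ψ) := by
    simp only [HH1, HH2, FF, intervalIntegral.integral_const_mul]
    ring
  -- key quantitative estimate
  have key : ∀ ℓ m n : ℕ, 1 ≤ ℓ → 1 ≤ m → 1 ≤ n →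
      |(1 / (2 * (ℓ:ℝ) * (m:ℝ) * (n:ℝ))) *
          (∑ k ∈ Finset.Icc 1 ℓ, ∑ s ∈ Finset.Icc 1 m, ∑ j ∈ Finset.Icc 1 n,
            FF a b c x ((k:ℝ) * Real.pi / (2*(ℓ:ℝ)+1)) ((s:ℝ) * Real.pi / (2*(m:ℝ)+1))
              ((j:ℝ) * Real.pi / (2*(n:ℝ)+1)))
        - (1/2) * ((2/Real.pi) * ∫ ψ in (0:ℝ)..(Real.pi/2), HH1 a b c x ψ)|
      ≤ (1/2) * ((Real.pi*(8*a^2/x^2) + MM a b c x)/ℓ + (Real.pi*(8*b^2/x^2) + MM a b c x)/m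
          + (Real.pi*(8*c^2/x^2) + MM a b c x)/n) := by
    intro ℓ m n hℓ hm hn
    have hl0 : (0:ℝ) < (ℓ:ℝ) := by exact_mod_cast Nat.lt_of_lt_of_le Nat.zero_lt_one hℓ
    have hm0 : (0:ℝ) < (m:ℝ) := by exact_mod_cast Nat.lt_of_lt_of_le Nat.zero_lt_one hm
    have hn0 : (0:ℝ) < (n:ℝ) := by exact_mod_cast Nat.lt_of_lt_of_le Nat.zero_lt_one hn
    have e3 : ∀ Φ Ψ : ℝ,
        |(1/(ℓ:ℝ)) * ∑ k ∈ Finset.Icc 1 ℓ,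
            FF a b c x ((k:ℝ) * Real.pi / (2*(ℓ:ℝ)+1)) Φ Ψ - HH2 a b c x Φ Ψ|
          ≤ (Real.pi*(8*a^2/x^2) + MM a b c x)/ℓ := by
      intro Φ Ψ
      exact riemann1d (fun θ => FF a b c x θ Φ Ψ) (8*a^2/x^2) (MM a b c x) (by positivity)
        (fun u _ v _ => FF_lip1 a b c x hx u v Φ Ψ)
        (fun t _ => FF_bound a b c x hx t Φ Ψ) ℓ hℓ
    have e2 : ∀ Ψ : ℝ,
        |(1/(m:ℝ)) * ∑ s ∈ Finset.Icc 1 m,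
            HH2 a b c x ((s:ℝ) * Real.pi / (2*(m:ℝ)+1)) Ψ - HH1 a b c x Ψ|
          ≤ (Real.pi*(8*b^2/x^2) + MM a b c x)/m := by
      intro Ψ
      exact riemann1d (fun φ => HH2 a b c x φ Ψ) (8*b^2/x^2) (MM a b c x) (by positivity)
        (fun u _ v _ => HH2_sub_phi a b c x hx u v Ψ)
        (fun t _ => HH2_bound a b c x hx t Ψ) m hm
    have e1 :
        |(1/(n:ℝ)) * ∑ j ∈ Finset.Icc 1 n,
            HH1 a b c x ((j:ℝ) * Real.pi / (2*(n:ℝ)+1))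
          - (2/Real.pi) * ∫ ψ in (0:ℝ)..(Real.pi/2), HH1 a b c x ψ|
          ≤ (Real.pi*(8*c^2/x^2) + MM a b c x)/n := by
      exact riemann1d (fun ψ => HH1 a b c x ψ) (8*c^2/x^2) (MM a b c x) (by positivity)
        (fun u _ v _ => HH1_sub a b c x hx u v)
        (fun t _ => HH1_bound a b c x hx t) n hn
    have hfact : (1 / (2 * (ℓ:ℝ) * (m:ℝ) * (n:ℝ))) *
          (∑ k ∈ Finset.Icc 1 ℓ, ∑ s ∈ Finset.Icc 1 m, ∑ j ∈ Finset.Icc 1 n,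
            FF a b c x ((k:ℝ) * Real.pi / (2*(ℓ:ℝ)+1)) ((s:ℝ) * Real.pi / (2*(m:ℝ)+1))
              ((j:ℝ) * Real.pi / (2*(n:ℝ)+1)))
        = (1/2) * ((1/(n:ℝ)) * ∑ j ∈ Finset.Icc 1 n, ((1/(m:ℝ)) * ∑ s ∈ Finset.Icc 1 m,
            ((1/(ℓ:ℝ)) * ∑ k ∈ Finset.Icc 1 ℓ,
              FF a b c x ((k:ℝ) * Real.pi / (2*(ℓ:ℝ)+1)) ((s:ℝ) * Real.pi / (2*(m:ℝ)+1))
                ((j:ℝ) * Real.pi / (2*(n:ℝ)+1))))) := by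
      rw [sum_swap3]
      simp only [Finset.mul_sum]
      have hc : (1:ℝ)/(2*(ℓ:ℝ)*(m:ℝ)*(n:ℝ)) = (1/2)*((1/(n:ℝ))*((1/(m:ℝ))*(1/(ℓ:ℝ)))) := by
        field_simp
      refine Finset.sum_congr rfl fun j _ => Finset.sum_congr rfl fun s _ =>
        Finset.sum_congr rfl fun k _ => ?_
      rw [hc]
      ring
    have d1 : ∀ j ∈ Finset.Icc 1 n,
        |(1/(m:ℝ)) * ∑ s ∈ Finset.Icc 1 m, ((1/(ℓ:ℝ)) * ∑ k ∈ Finset.Icc 1 ℓ,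
            FF a b c x ((k:ℝ) * Real.pi / (2*(ℓ:ℝ)+1)) ((s:ℝ) * Real.pi / (2*(m:ℝ)+1))
              ((j:ℝ) * Real.pi / (2*(n:ℝ)+1)))
          - HH1 a b c x ((j:ℝ) * Real.pi / (2*(n:ℝ)+1))|
        ≤ (Real.pi*(8*a^2/x^2) + MM a b c x)/ℓ + (Real.pi*(8*b^2/x^2) + MM a b c x)/m := by
      intro j _
      have step : (1/(m:ℝ)) * ∑ s ∈ Finset.Icc 1 m, ((1/(ℓ:ℝ)) * ∑ k ∈ Finset.Icc 1 ℓ,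
            FF a b c x ((k:ℝ) * Real.pi / (2*(ℓ:ℝ)+1)) ((s:ℝ) * Real.pi / (2*(m:ℝ)+1))
              ((j:ℝ) * Real.pi / (2*(n:ℝ)+1)))
          - HH1 a b c x ((j:ℝ) * Real.pi / (2*(n:ℝ)+1))
          = (1/(m:ℝ)) * (∑ s ∈ Finset.Icc 1 m, ((1/(ℓ:ℝ)) * (∑ k ∈ Finset.Icc 1 ℓ,
              FF a b c x ((k:ℝ) * Real.pi / (2*(ℓ:ℝ)+1)) ((s:ℝ) * Real.pi / (2*(m:ℝ)+1))
                ((j:ℝ) * Real.pi / (2*(n:ℝ)+1)))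
              - HH2 a b c x ((s:ℝ) * Real.pi / (2*(m:ℝ)+1)) ((j:ℝ) * Real.pi / (2*(n:ℝ)+1))))
            + ((1/(m:ℝ)) * ∑ s ∈ Finset.Icc 1 m,
                HH2 a b c x ((s:ℝ) * Real.pi / (2*(m:ℝ)+1)) ((j:ℝ) * Real.pi / (2*(n:ℝ)+1))
              - HH1 a b c x ((j:ℝ) * Real.pi / (2*(n:ℝ)+1))) := by
        rw [Finset.sum_sub_distrib, mul_sub]
        ring
      rw [step]
      refine (abs_add_le _ _).trans (add_le_add ?_ (e2 _))
      exact avg_abs_le hm (fun s _ => e3 _ _)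
    rw [hfact, ← mul_sub, abs_mul, abs_of_pos (by norm_num : (0:ℝ) < 1/2)]
    have step2 : (1/(n:ℝ)) * ∑ j ∈ Finset.Icc 1 n, ((1/(m:ℝ)) * ∑ s ∈ Finset.Icc 1 m,
          ((1/(ℓ:ℝ)) * ∑ k ∈ Finset.Icc 1 ℓ,
            FF a b c x ((k:ℝ) * Real.pi / (2*(ℓ:ℝ)+1)) ((s:ℝ) * Real.pi / (2*(m:ℝ)+1))
              ((j:ℝ) * Real.pi / (2*(n:ℝ)+1))))
        - (2/Real.pi) * ∫ ψ in (0:ℝ)..(Real.pi/2), HH1 a b c x ψ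
        = (1/(n:ℝ)) * (∑ j ∈ Finset.Icc 1 n, ((1/(m:ℝ)) * (∑ s ∈ Finset.Icc 1 m,
            ((1/(ℓ:ℝ)) * ∑ k ∈ Finset.Icc 1 ℓ,
              FF a b c x ((k:ℝ) * Real.pi / (2*(ℓ:ℝ)+1)) ((s:ℝ) * Real.pi / (2*(m:ℝ)+1))
                ((j:ℝ) * Real.pi / (2*(n:ℝ)+1))))
            - HH1 a b c x ((j:ℝ) * Real.pi / (2*(n:ℝ)+1))))
          + ((1/(n:ℝ)) * ∑ j ∈ Finset.Icc 1 n, HH1 a b c x ((j:ℝ) * Real.pi / (2*(n:ℝ)+1))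
            - (2/Real.pi) * ∫ ψ in (0:ℝ)..(Real.pi/2), HH1 a b c x ψ) := by
      rw [Finset.sum_sub_distrib, mul_sub]
      ring
    rw [step2]
    gcongr
    refine (abs_add_le _ _).trans (add_le_add ?_ e1)
    exact avg_abs_le hn d1
  -- conclude by squeezing
  rw [← tendsto_sub_nhds_zero_iff]
  apply squeeze_zero_norm'
    (a := fun p : ℕ × ℕ × ℕ => (1/2) * ((Real.pi*(8*a^2/x^2) + MM a b c x)/(p.1:ℝ)
      + (Real.pi*(8*b^2/x^2) + MM a b c x)/(p.2.1:ℝ)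
      + (Real.pi*(8*c^2/x^2) + MM a b c x)/(p.2.2:ℝ)))
  · refine Filter.eventually_atTop.2 ⟨(1,1,1), fun p hp => ?_⟩
    rw [Real.norm_eq_abs, htgt]
    exact key p.1 p.2.1 p.2.2 hp.1 hp.2.1 hp.2.2
  · have h1 : Filter.Tendsto (fun p : ℕ × ℕ × ℕ => ((p.1:ℕ):ℝ)) Filter.atTop Filter.atTop :=
      tendsto_natCast_atTop_atTop.comp
        (Filter.tendsto_atTop_atTop.2 fun b => ⟨(b,1,1), fun p hp => hp.1⟩)
    have h2 : Filter.Tendsto (fun p : ℕ × ℕ × ℕ => ((p.2.1:ℕ):ℝ)) Filter.atTop Filter.atTop :=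
      tendsto_natCast_atTop_atTop.comp
        (Filter.tendsto_atTop_atTop.2 fun b => ⟨(1,b,1), fun p hp => hp.2.1⟩)
    have h3 : Filter.Tendsto (fun p : ℕ × ℕ × ℕ => ((p.2.2:ℕ):ℝ)) Filter.atTop Filter.atTop :=
      tendsto_natCast_atTop_atTop.comp
        (Filter.tendsto_atTop_atTop.2 fun b => ⟨(1,1,b), fun p hp => hp.2.2⟩)
    have g1 := Filter.Tendsto.div_atTop
      (tendsto_const_nhds (x := Real.pi*(8*a^2/x^2) + MM a b c x)) h1
    have g2 := Filter.Tendsto.div_atTop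
      (tendsto_const_nhds (x := Real.pi*(8*b^2/x^2) + MM a b c x)) h2
    have g3 := Filter.Tendsto.div_atTop
      (tendsto_const_nhds (x := Real.pi*(8*c^2/x^2) + MM a b c x)) h3
    have := ((g1.add g2).add g3).const_mul (1/2 : ℝ)
    simpa using this
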